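/- arXiv:math/9611207 — 9 statements merged into one kernel-verified Lean document; each statement's English description precedes it below -/
import Mathlib

section
/- Let G be a Polish group and X a Polish G-space. Then for every x ∈ X, the orbit [x]_G = {g·x : g ∈ G} is a Borel subset of X. -/
/-!
The stabilizer `H` of `x` is a closed subgroup, and the orbit map `g ↦ g • x` is continuous
and injective on any set `T` meeting every left coset of `H` exactly once, with image the orbit.
By the Lusin–Souslin theorem it therefore suffices to find a Borel such transversal `T`. The
cosets form a closed-valued map `g ↦ g • H` whose hitting sets `{g | (g • H) ∩ U ≠ ∅} = U / H`
are open, so the Kuratowski–Ryll-Nardzewski selection argument gives a selector `σ` with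
`g ↦ σ (g • H)` Borel; its fixed points form the transversal.
-/

open Set Metric Filter Topology TopologicalSpace MeasureTheory Pointwise

theorem measurable_sInf_setOf {Y : Type*} [MeasurableSpace Y] {p : Y → ℕ → Prop}
    (hp : ∀ y, ∃ k, p y k) (hmeas : ∀ k, MeasurableSet {y | p y k}) :
    Measurable fun y => sInf {k | p y k} := by
  classical
  convert measurable_find hp hmeas using 2 with y
  exact Nat.sInf_def (hp y)

namespace DenseRange

variable {X : Type*} [PseudoMetricSpace X] {u : ℕ → X} {C : Set X}

theorem exists_inter_ball_nonempty (hu : DenseRange u) (hC : C.Nonempty) {s : ℝ} (hs : 0 < s) :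
    ∃ k, (C ∩ ball (u k) s).Nonempty :=
  let ⟨c, hc⟩ := hC
  (hu.exists_dist_lt c hs).imp fun _ hk => ⟨c, hc, hk⟩

theorem exists_inter_ball_nonempty_and_mem_ball (hu : DenseRange u) {p : X} {r s : ℝ}
    (hp : (C ∩ ball p r).Nonempty) (hs : 0 < s) :
    ∃ k, (C ∩ ball (u k) s).Nonempty ∧ p ∈ ball (u k) r := by
  obtain ⟨c, hcC, hcp⟩ := hp
  obtain ⟨k, hk⟩ := hu.exists_dist_lt c (lt_min hs (sub_pos.2 (mem_ball.1 hcp)))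
  refine ⟨k, ⟨c, hcC, mem_ball.2 (hk.trans_le (min_le_left _ _))⟩, mem_ball'.2 ?_⟩
  calc dist (u k) p ≤ dist (u k) c + dist c p := dist_triangle _ _ _
    _ < (r - dist c p) + dist c p := by
      gcongr
      exact (dist_comm c (u k) ▸ hk).trans_le (min_le_right _ _)
    _ = r := sub_add_cancel _ _

end DenseRange

namespace KuratowskiRyllNardzewski

variable {X : Type*} [MetricSpace X] (u : ℕ → X)

/-- Always taking the *least* admissible index of the dense sequence `u` is what makes
`y ↦ approx u (F y) n` measurable. -/
noncomputable def approx (C : Set X) : ℕ → X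
  | 0 => u (sInf {k | (C ∩ ball (u k) 1).Nonempty})
  | n + 1 => u (sInf {k | (C ∩ ball (u k) ((1 / 2) ^ (n + 1))).Nonempty ∧
      approx C n ∈ ball (u k) ((1 / 2) ^ n)})

noncomputable def selector [Nonempty X] (C : Set X) : X :=
  limUnder atTop (approx u C)

variable {u} {C : Set X}

theorem approx_succ_spec (hu : DenseRange u) {n : ℕ}
    (hn : (C ∩ ball (approx u C n) ((1 / 2) ^ n)).Nonempty) :
    (C ∩ ball (approx u C (n + 1)) ((1 / 2) ^ (n + 1))).Nonempty ∧
      approx u C n ∈ ball (approx u C (n + 1)) ((1 / 2) ^ n) :=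
  Nat.sInf_mem (hu.exists_inter_ball_nonempty_and_mem_ball hn (by positivity))

theorem inter_ball_approx_nonempty (hu : DenseRange u) (hC : C.Nonempty) :
    ∀ n, (C ∩ ball (approx u C n) ((1 / 2) ^ n)).Nonempty
  | 0 => by
    rw [pow_zero]
    exact Nat.sInf_mem (hu.exists_inter_ball_nonempty hC one_pos)
  | n + 1 => (approx_succ_spec hu (inter_ball_approx_nonempty hu hC n)).1

theorem cauchySeq_approx (hu : DenseRange u) (hC : C.Nonempty) : CauchySeq (approx u C) :=
  cauchySeq_of_le_geometric (1 / 2) 1 (by norm_num) fun n => by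
    simpa using (mem_ball.1 (approx_succ_spec hu (inter_ball_approx_nonempty hu hC n)).2).le

theorem measurable_approx {Y : Type*} [MeasurableSpace Y] [MeasurableSpace X]
    [OpensMeasurableSpace X] {F : Y → Set X} (hu : DenseRange u) (hF_ne : ∀ y, (F y).Nonempty)
    (hF : ∀ U, IsOpen U → MeasurableSet {y | (F y ∩ U).Nonempty}) :
    ∀ n, Measurable fun y => approx u (F y) n
  | 0 => measurable_from_nat.comp <| measurable_sInf_setOf
      (fun y => hu.exists_inter_ball_nonempty (hF_ne y) one_pos) fun _ => hF _ isOpen_ball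
  | n + 1 => measurable_from_nat.comp <| measurable_sInf_setOf
      (fun y => hu.exists_inter_ball_nonempty_and_mem_ball
        (inter_ball_approx_nonempty hu (hF_ne y) n) (by positivity))
      fun _ => (hF _ isOpen_ball).inter (measurable_approx hu hF_ne hF n measurableSet_ball)

variable [Nonempty X] [CompleteSpace X]

theorem tendsto_approx (hu : DenseRange u) (hC : C.Nonempty) :
    Tendsto (approx u C) atTop (𝓝 (selector u C)) :=
  (cauchySeq_approx hu hC).tendsto_limUnder

theorem selector_mem (hu : DenseRange u) (hC : IsClosed C) (hne : C.Nonempty) :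
    selector u C ∈ C := by
  have h_small : Tendsto (fun n => infDist (approx u C n) C) atTop (𝓝 0) := by
    refine squeeze_zero (fun _ => infDist_nonneg) (fun n => ?_)
      (tendsto_pow_atTop_nhds_zero_of_lt_one (by norm_num : (0 : ℝ) ≤ 1 / 2) (by norm_num))
    obtain ⟨c, hcC, hc⟩ := inter_ball_approx_nonempty hu hne n
    exact ((infDist_lt_iff hne).2 ⟨c, hcC, mem_ball'.1 hc⟩).le
  have h_lim := ((continuous_infDist_pt C).tendsto _).comp (tendsto_approx hu hne)
  exact (hC.mem_iff_infDist_zero hne).2 (tendsto_nhds_unique h_lim h_small)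

theorem measurable_selector {Y : Type*} [MeasurableSpace Y] [MeasurableSpace X] [BorelSpace X]
    {F : Y → Set X} (hu : DenseRange u) (hF_ne : ∀ y, (F y).Nonempty)
    (hF : ∀ U, IsOpen U → MeasurableSet {y | (F y ∩ U).Nonempty}) :
    Measurable fun y => selector u (F y) :=
  measurable_of_tendsto_metrizable (measurable_approx hu hF_ne hF)
    (tendsto_pi_nhds.2 fun y => tendsto_approx hu (hF_ne y))

end KuratowskiRyllNardzewski

theorem exists_measurable_selector {X Y : Type*} [TopologicalSpace X] [PolishSpace X]
    [MeasurableSpace X] [BorelSpace X] [Nonempty X] [MeasurableSpace Y] {F : Y → Set X}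
    (hF_closed : ∀ y, IsClosed (F y)) (hF_ne : ∀ y, (F y).Nonempty)
    (hF : ∀ U, IsOpen U → MeasurableSet {y | (F y ∩ U).Nonempty}) :
    ∃ σ : Set X → X, (∀ y, σ (F y) ∈ F y) ∧ Measurable fun y => σ (F y) := by
  let := upgradeIsCompletelyMetrizable X
  obtain ⟨u, hu⟩ := exists_dense_seq X
  exact ⟨KuratowskiRyllNardzewski.selector u,
    fun y => KuratowskiRyllNardzewski.selector_mem hu (hF_closed y) (hF_ne y),
    KuratowskiRyllNardzewski.measurable_selector hu hF_ne hF⟩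

namespace Subgroup

variable {G : Type*} [Group G]

theorem setOf_smul_inter_nonempty (H : Subgroup G) (U : Set G) :
    {g : G | (g • (H : Set G) ∩ U).Nonempty} = U / H := by
  ext g
  simp only [mem_ofPred_eq, smul_inter_nonempty_iff', Set.mem_div, SetLike.mem_coe]
  tauto

theorem exists_measurableSet_isComplement [TopologicalSpace G] [IsTopologicalGroup G]
    [PolishSpace G] [MeasurableSpace G] [BorelSpace G] (H : Subgroup G)
    (hH : IsClosed (H : Set G)) : ∃ T : Set G, MeasurableSet T ∧ IsComplement T H := by
  obtain ⟨σ, hσ_mem, hσ_meas⟩ :=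
    exists_measurable_selector (F := fun g : G => g • (H : Set G))
      (fun g => hH.leftCoset g) (fun g => ⟨g, mem_own_leftCoset H.toSubmonoid g⟩)
      fun U hU => H.setOf_smul_inter_nonempty U ▸ hU.div_right.measurableSet
  refine ⟨{g | σ (g • (H : Set G)) = g}, measurableSet_eq_fun hσ_meas measurable_id, ?_⟩
  rw [isComplement_iff_existsUnique_inv_mul_mem]
  intro g
  have hσg : σ (g • (H : Set G)) • (H : Set G) = g • H :=
    (leftCoset_eq_iff _).2 (by simpa using H.inv_mem ((mem_leftCoset_iff g).1 (hσ_mem g)))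
  refine ⟨⟨σ (g • (H : Set G)), by simp [hσg]⟩, (mem_leftCoset_iff _).1 ?_, ?_⟩
  · change g ∈ σ (g • (H : Set G)) • (H : Set G)
    rw [hσg]
    exact mem_own_leftCoset H.toSubmonoid g
  · rintro ⟨s, hs⟩ hsg
    exact Subtype.ext (hs.symm.trans (congrArg σ ((leftCoset_eq_iff _).2 hsg)))

end Subgroup

namespace MulAction

variable {G X : Type*} [Group G] [MulAction G X] {x : X} {T : Set G}

theorem image_smul_eq_orbit_of_isComplement (hT : Subgroup.IsComplement T (stabilizer G x)) :
    (· • x) '' T = orbit G x := by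
  refine Subset.antisymm (image_subset_iff.2 fun t _ => mem_orbit x t) ?_
  rintro _ ⟨g, rfl⟩
  obtain ⟨⟨⟨t, ht⟩, ⟨h, hh⟩⟩, hth, -⟩ := hT.existsUnique g
  refine ⟨t, ht, ?_⟩
  dsimp only at hth ⊢
  rw [← hth, mul_smul, mem_stabilizer_iff.1 hh]

theorem injOn_smul_of_isComplement (hT : Subgroup.IsComplement T (stabilizer G x)) :
    InjOn (· • x) T := by
  intro a ha b hb hab
  have ha_inv_b : a⁻¹ * b ∈ stabilizer G x := by
    rw [mem_stabilizer_iff, mul_smul, ← show a • x = b • x from hab, inv_smul_smul]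
  have hb_inv_b : b⁻¹ * b ∈ stabilizer G x := by simp
  have h_unique := Subgroup.isComplement_iff_existsUnique_inv_mul_mem.1 hT b
  exact congrArg Subtype.val
    (h_unique.unique (y₁ := ⟨a, ha⟩) (y₂ := ⟨b, hb⟩) ha_inv_b hb_inv_b)

end MulAction

/-- If `G` is a Polish group and `X` a Polish `G`-space, then every orbit
`[x]_G = {g • x : g ∈ G}` is a Borel subset of `X`. -/
theorem orbit_measurableSet
    (G : Type*) [Group G] [TopologicalSpace G] [IsTopologicalGroup G] [PolishSpace G]
    (X : Type*) [TopologicalSpace X] [PolishSpace X] [MeasurableSpace X] [BorelSpace X]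
    [MulAction G X] [ContinuousSMul G X] (x : X) :
    MeasurableSet (MulAction.orbit G x) := by
  borelize G
  have h_cont : Continuous fun g : G => g • x := continuous_id.smul continuous_const
  obtain ⟨T, hT_meas, hT⟩ := (MulAction.stabilizer G x).exists_measurableSet_isComplement
    (isClosed_singleton.preimage h_cont)
  rw [← MulAction.image_smul_eq_orbit_of_isComplement hT]
  exact hT_meas.image_of_continuousOn_injOn h_cont.continuousOn
    (MulAction.injOn_smul_of_isComplement hT)
end

section
/- Let G be a Polish group, X a Polish G-space, B ⊆ X a Borel set, and U ⊆ G an open set. Then the Vaught transform B^{ΔU} = {x ∈ X : {g ∈ U : g·x ∈ B} is nonmeager in G} is a Borel subset of X. -/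
/-- The Vaught transform `B^{ΔU}`: the set of `x` such that `{g ∈ U : g • x ∈ B}` is
nonmeager in `G`. -/
def vaughtDelta {G X : Type*} [TopologicalSpace G] [SMul G X] (B : Set X) (U : Set G) : Set X :=
  {x : X | ¬ IsMeagre {g : G | g ∈ U ∧ g • x ∈ B}}

/-!
Induction on the Borel set `B`, for all open `U` at once. For open `B` the set
`{g ∈ U : g • x ∈ B}` is open, so it is nonmeagre iff nonempty, and `B^{ΔU} = ⋃_{g ∈ U} g⁻¹ B`
is open. Countable unions commute with the transform. For complements one localizes: the
section `{g : g • x ∈ B}` has the Baire property, so `U` minus it is nonmeagre iff it is meagre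
on some nonempty basic open `V ⊆ U`, whence `(Bᶜ)^{ΔU} = ⋃ {(B^{ΔV})ᶜ : V basic, ∅ ≠ V ⊆ U}`,
a countable union.
-/

open Set Filter Topology TopologicalSpace

section BaireCategory

variable {α : Type*} [TopologicalSpace α]

theorem BaireMeasurableSet.exists_isOpen_subset_isMeagre_diff {S U : Set α}
    (hS : BaireMeasurableSet S) (hSm : ¬ IsMeagre S) (hU : IsOpen U) (hSU : S ⊆ U) :
    ∃ V, IsOpen V ∧ V.Nonempty ∧ V ⊆ U ∧ IsMeagre (V \ S) := by
  obtain ⟨u, hu, hSu⟩ := hS.residualEq_isOpen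
  have hSu' : ∀ᶠ x in residual α, x ∈ S ↔ x ∈ u := eventuallyEq_set.mp hSu
  have hSdiff : IsMeagre (S \ u) := mem_of_superset hSu' fun x hx hxS => hxS.2 (hx.1 hxS.1)
  have hdiffS : IsMeagre (u \ S) := mem_of_superset hSu' fun x hx hxu => hxu.2 (hx.2 hxu.1)
  have hne : (u ∩ U).Nonempty := by
    by_contra h
    exact hSm (hSdiff.mono fun x hxS => (⟨hxS, fun hxu => h ⟨x, hxu, hSU hxS⟩⟩ : x ∈ S \ u))
  exact ⟨u ∩ U, hu.inter hU, hne, inter_subset_right,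
    hdiffS.mono (sdiff_subset_sdiff_left inter_subset_left)⟩

theorem not_isMeagre_diff_iff_exists_basis [BaireSpace α] {b : Set (Set α)}
    (hb : IsTopologicalBasis b) {A U : Set α} (hA : BaireMeasurableSet A) (hU : IsOpen U) :
    ¬ IsMeagre (U \ A) ↔ ∃ V ∈ b, V.Nonempty ∧ V ⊆ U ∧ IsMeagre (V ∩ A) := by
  constructor
  · intro h
    obtain ⟨W, hW, ⟨x, hxW⟩, hWU, hWm⟩ :=
      (hU.baireMeasurableSet.diff hA).exists_isOpen_subset_isMeagre_diff h hU sdiff_subset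
    obtain ⟨V, hVb, hxV, hVW⟩ := hb.exists_subset_of_mem_open hxW hW
    exact ⟨V, hVb, ⟨x, hxV⟩, hVW.trans hWU,
      hWm.mono fun y hy => (⟨hVW hy.1, fun hy' => hy'.2 hy.2⟩ : y ∈ W \ (U \ A))⟩
  · rintro ⟨V, hVb, hVne, hVU, hVA⟩ h
    refine not_isMeagre_of_isOpen (hb.isOpen hVb) hVne ((hVA.union h).mono fun y hy => ?_)
    by_cases hyA : y ∈ A
    · exact Or.inl ⟨hy, hyA⟩
    · exact Or.inr ⟨hVU hy, hyA⟩

end BaireCategory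

section VaughtTransform

variable {G X : Type*} [TopologicalSpace G] [SMul G X]

theorem mem_vaughtDelta {B : Set X} {U : Set G} {x : X} :
    x ∈ vaughtDelta B U ↔ ¬ IsMeagre (U ∩ (· • x) ⁻¹' B) :=
  Iff.rfl

theorem vaughtDelta_iUnion {ι : Type*} [Countable ι] (B : ι → Set X) (U : Set G) :
    vaughtDelta (⋃ i, B i) U = ⋃ i, vaughtDelta (B i) U := by
  ext x
  simp only [mem_vaughtDelta, preimage_iUnion, inter_iUnion, mem_iUnion, ← not_forall,
    not_iff_not]
  exact ⟨fun h i => h.mono (subset_iUnion_of_subset i Subset.rfl), isMeagre_iUnion⟩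

theorem vaughtDelta_compl [BaireSpace G] {b : Set (Set G)} (hb : IsTopologicalBasis b)
    {B : Set X} (hB : ∀ x : X, BaireMeasurableSet ((fun g : G => g • x) ⁻¹' B)) {U : Set G} (hU : IsOpen U) :
    vaughtDelta Bᶜ U = ⋃ V ∈ {V ∈ b | V.Nonempty ∧ V ⊆ U}, (vaughtDelta B V)ᶜ := by
  ext x
  simp only [mem_vaughtDelta, preimage_compl, ← sdiff_eq, not_isMeagre_diff_iff_exists_basis hb
    (hB x) hU, mem_iUnion, mem_compl_iff, mem_sep_iff, not_not, exists_prop, and_assoc]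

variable [TopologicalSpace X] [ContinuousSMul G X]

theorem vaughtDelta_of_isOpen [BaireSpace G] {B : Set X} (hB : IsOpen B) {U : Set G}
    (hU : IsOpen U) : vaughtDelta B U = ⋃ g ∈ U, (g • ·) ⁻¹' B := by
  ext x
  have hopen : IsOpen (U ∩ (· • x) ⁻¹' B) :=
    hU.inter (hB.preimage (continuous_id.smul continuous_const))
  simp only [mem_vaughtDelta, mem_iUnion, mem_preimage, exists_prop]
  exact ⟨fun h => nonempty_of_not_isMeagre h, fun h => not_isMeagre_of_isOpen hopen h⟩

theorem isOpen_vaughtDelta [BaireSpace G] {B : Set X} (hB : IsOpen B) {U : Set G}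
    (hU : IsOpen U) : IsOpen (vaughtDelta B U) := by
  rw [vaughtDelta_of_isOpen hB hU]
  exact isOpen_biUnion fun g _ => hB.preimage (continuous_const_smul g)

end VaughtTransform

theorem vaughtDelta_measurableSet_general
    (G : Type*) [Group G] [TopologicalSpace G] [PolishSpace G]
    (X : Type*) [TopologicalSpace X] [MeasurableSpace X] [BorelSpace X]
    [MulAction G X] [ContinuousSMul G X]
    (B : Set X) (hB : MeasurableSet B) (U : Set G) (hU : IsOpen U) :
    MeasurableSet (vaughtDelta B U) := by
  borelize G
  obtain ⟨b, hbc, -, hb⟩ := exists_countable_basis G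
  induction B, hB using MeasurableSet.induction_on_open generalizing U with
  | isOpen B hB => exact (isOpen_vaughtDelta hB hU).measurableSet
  | compl B hB ih =>
    have hsec (x : X) : BaireMeasurableSet ((fun g : G => g • x) ⁻¹' B) :=
      (hB.preimage (by fun_prop : Continuous fun g : G => g • x).measurable).baireMeasurableSet
    rw [vaughtDelta_compl hb hsec hU]
    exact .biUnion (hbc.mono (sep_subset _ _)) fun V hV => (ih V (hb.isOpen hV.1)).compl
  | iUnion B _ _ ih =>
    rw [vaughtDelta_iUnion]
    exact .iUnion fun i => ih i U hU

/-- The Vaught transform of a Borel set by an open set is Borel. -/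
theorem vaughtDelta_measurableSet
    (G : Type*) [Group G] [TopologicalSpace G] [IsTopologicalGroup G] [PolishSpace G]
    (X : Type*) [TopologicalSpace X] [PolishSpace X] [MeasurableSpace X] [BorelSpace X]
    [MulAction G X] [ContinuousSMul G X]
    (B : Set X) (hB : MeasurableSet B) (U : Set G) (hU : IsOpen U) :
    MeasurableSet (vaughtDelta B U) :=
  vaughtDelta_measurableSet_general G X B hB U hU
end

section
/- There is a Borel function θ : ℝ → 2^ℕ such that for all x₁, x₂ ∈ ℝ: x₁ − x₂ ∈ ℚ if and only if θ(x₁) E₀ θ(x₂). -/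
/-!
Write `x` in the factorial number system: the `n`-th digit `⌊(n+1)! x⌋ - (n+1) ⌊n! x⌋` lies in
`[0, n]`. Adding a rational `q` adds the integer `n! q` to `⌊n! x⌋` once `q.den ≤ n`, so it leaves
all later digits unchanged. Conversely, if the digits of `x₁` and `x₂` agree from `N` on, then
`(⌊n! x₁⌋ - ⌊n! x₂⌋) / n!` is constant for `n ≥ N`, and it tends to `x₁ - x₂`, which is therefore
rational. Coding the digits in unary, in disjoint finite blocks of bits, turns eventual agreement
of digits into eventual agreement of codes.
-/

open Filter Topology Nat

theorem tendsto_floor_mul_div_atTop {R : Type*} [TopologicalSpace R] [Field R] [LinearOrder R]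
    [IsStrictOrderedRing R] [OrderTopology R] [FloorRing R] (x : R) :
    Tendsto (fun y ↦ (⌊y * x⌋ : R) / y) atTop (𝓝 x) := by
  have lower : Tendsto (fun y : R ↦ x - y⁻¹) atTop (𝓝 x) := by
    simpa using tendsto_const_nhds.sub (tendsto_inv_atTop_zero (𝕜 := R))
  refine tendsto_of_tendsto_of_tendsto_of_le_of_le' lower tendsto_const_nhds ?_ ?_
  · filter_upwards [eventually_gt_atTop 0] with y hy
    rw [le_div_iff₀ hy, sub_mul, inv_mul_cancel₀ hy.ne', mul_comm]
    linarith [Int.lt_floor_add_one (y * x)]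
  · filter_upwards [eventually_gt_atTop 0] with y hy
    rw [div_le_iff₀ hy, mul_comm]
    exact Int.floor_le _

theorem Nat.tendsto_sqrt_atTop : Tendsto Nat.sqrt atTop atTop :=
  tendsto_atTop_atTop.2 fun b ↦ ⟨b * b, fun _ hm ↦ Nat.le_sqrt.2 hm⟩

theorem exists_intCast_eq_factorial_mul_rat {q : ℚ} {n : ℕ} (hn : q.den ≤ n) :
    ∃ k : ℤ, (k : ℝ) = n ! * q := by
  obtain ⟨c, hc⟩ := Nat.dvd_factorial q.pos hn
  refine ⟨c * q.num, ?_⟩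
  rw [hc, Rat.cast_def]
  push_cast
  field_simp

section UnaryCode

/-- Codes a sequence `d` with `0 ≤ d n ≤ 2n + 1` in unary, `d n` in the bits `n², …, n² + 2n`. -/
def unaryCode (d : ℕ → ℤ) (m : ℕ) : Bool := decide (((m - m.sqrt ^ 2 : ℕ) : ℤ) < d m.sqrt)

theorem measurable_unaryCode {α : Type*} [MeasurableSpace α] {d : ℕ → α → ℤ}
    (hd : ∀ n, Measurable (d n)) : Measurable fun x ↦ unaryCode (d · x) :=
  measurable_pi_lambda _ fun m ↦
    (measurable_from_top (f := fun z : ℤ ↦ decide (((m - m.sqrt ^ 2 : ℕ) : ℤ) < z))).comp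
      (hd m.sqrt)

theorem unaryCode_sq_add (d : ℕ → ℤ) {n j : ℕ} (hj : j ≤ 2 * n) :
    unaryCode d (n ^ 2 + j) = decide ((j : ℤ) < d n) := by
  have hsqrt : (n ^ 2 + j).sqrt = n := Nat.sqrt_add_eq' n (by omega)
  simp only [unaryCode, hsqrt, Nat.add_sub_cancel_left]

theorem Int.eq_of_forall_natCast_lt_iff {a b : ℤ} {k : ℕ} (ha : 0 ≤ a ∧ a ≤ k + 1)
    (hb : 0 ≤ b ∧ b ≤ k + 1) (h : ∀ j : ℕ, j ≤ k → ((j : ℤ) < a ↔ (j : ℤ) < b)) : a = b := by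
  rcases lt_trichotomy a b with hab | hab | hab
  · have := h a.toNat (by omega)
    omega
  · exact hab
  · have := h b.toNat (by omega)
    omega

variable {d₁ d₂ : ℕ → ℤ}

theorem unaryCode_eventuallyEq_iff (h₁ : ∀ n, 0 ≤ d₁ n ∧ d₁ n ≤ 2 * n + 1)
    (h₂ : ∀ n, 0 ≤ d₂ n ∧ d₂ n ≤ 2 * n + 1) :
    unaryCode d₁ =ᶠ[atTop] unaryCode d₂ ↔ d₁ =ᶠ[atTop] d₂ := by
  constructor
  · intro h
    obtain ⟨N, hN⟩ := eventually_atTop.1 h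
    filter_upwards [eventually_ge_atTop N] with n hn
    refine Int.eq_of_forall_natCast_lt_iff (by exact_mod_cast h₁ n) (by exact_mod_cast h₂ n)
      fun j hj ↦ ?_
    have := hN (n ^ 2 + j) (by nlinarith)
    simpa [unaryCode_sq_add _ hj] using this
  · intro h
    filter_upwards [h.comp_tendsto Nat.tendsto_sqrt_atTop] with m hm
    simp only [unaryCode, Function.comp_apply] at hm ⊢
    rw [hm]

end UnaryCode

section FactorialDigits

noncomputable def factorialFloor (n : ℕ) (x : ℝ) : ℤ := ⌊(n ! : ℝ) * x⌋

noncomputable def factorialDigit (n : ℕ) (x : ℝ) : ℤ :=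
  factorialFloor (n + 1) x - (n + 1) * factorialFloor n x

theorem measurable_factorialDigit (n : ℕ) : Measurable (factorialDigit n) := by
  unfold factorialDigit factorialFloor
  fun_prop

theorem factorialFloor_succ_eq (n : ℕ) (x : ℝ) :
    factorialFloor (n + 1) x = (n + 1) * factorialFloor n x + factorialDigit n x := by
  rw [factorialDigit]
  ring

theorem factorialFloor_succ (n : ℕ) (x : ℝ) :
    factorialFloor (n + 1) x = ⌊((n : ℝ) + 1) * ((n ! : ℝ) * x)⌋ := by
  rw [factorialFloor, factorial_succ]
  push_cast
  ring_nf

theorem factorialDigit_nonneg (n : ℕ) (x : ℝ) : 0 ≤ factorialDigit n x := by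
  have h : ((n : ℤ) + 1) * factorialFloor n x ≤ factorialFloor (n + 1) x := by
    rw [factorialFloor_succ, Int.le_floor]
    push_cast
    exact mul_le_mul_of_nonneg_left (Int.floor_le _) (by positivity)
  rw [factorialDigit]
  omega

theorem factorialDigit_le (n : ℕ) (x : ℝ) : factorialDigit n x ≤ n := by
  have h : factorialFloor (n + 1) x < ((n : ℤ) + 1) * (factorialFloor n x + 1) := by
    rw [factorialFloor_succ, Int.floor_lt]
    push_cast
    exact mul_lt_mul_of_pos_left (Int.lt_floor_add_one _) (by positivity)
  rw [factorialDigit]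
  linarith

theorem tendsto_factorialFloor_div (x : ℝ) :
    Tendsto (fun n ↦ (factorialFloor n x : ℝ) / (n ! : ℝ)) atTop (𝓝 x) :=
  (tendsto_floor_mul_div_atTop x).comp
    (tendsto_natCast_atTop_atTop.comp factorial_tendsto_atTop)

theorem factorialDigit_add_rat {q : ℚ} {n : ℕ} (hn : q.den ≤ n) (x : ℝ) :
    factorialDigit n (x + q) = factorialDigit n x := by
  obtain ⟨k, hk⟩ := exists_intCast_eq_factorial_mul_rat hn
  have h₀ : factorialFloor n (x + q) = factorialFloor n x + k := by
    rw [factorialFloor, mul_add, ← hk, Int.floor_add_intCast, factorialFloor]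
  have h₁ : factorialFloor (n + 1) (x + q) = factorialFloor (n + 1) x + (n + 1) * k := by
    have : ((n + 1) ! : ℝ) * (x + q) = (n + 1) ! * x + (((n + 1) * k : ℤ) : ℝ) := by
      push_cast [factorial_succ, hk]
      ring
    rw [factorialFloor, this, Int.floor_add_intCast, factorialFloor]
  rw [factorialDigit, factorialDigit, h₀, h₁]
  ring

theorem exists_rat_eq_sub_of_factorialDigit_eventuallyEq {x₁ x₂ : ℝ}
    (h : (factorialDigit · x₁) =ᶠ[atTop] (factorialDigit · x₂)) :
    ∃ q : ℚ, (q : ℝ) = x₁ - x₂ := by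
  let D : ℕ → ℝ := fun n ↦ ((factorialFloor n x₁ - factorialFloor n x₂ : ℤ) : ℝ) / (n ! : ℝ)
  obtain ⟨N, hN⟩ := eventually_atTop.1 h
  have hconst : ∀ n ≥ N, D n = D N := by
    intro n hn
    induction n, hn using Nat.le_induction with
    | base => rfl
    | succ n hn ih =>
      rw [← ih]
      simp only [D, factorialFloor_succ_eq, hN n hn, factorial_succ]
      push_cast
      field_simp
      ring
  have hlim : Tendsto D atTop (𝓝 (x₁ - x₂)) := by
    simpa only [D, Int.cast_sub, sub_div] using
      (tendsto_factorialFloor_div x₁).sub (tendsto_factorialFloor_div x₂)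
  have hD : D N = x₁ - x₂ :=
    tendsto_nhds_unique (tendsto_const_nhds.congr' (eventually_atTop.2 ⟨N, fun n hn ↦
      (hconst n hn).symm⟩)) hlim
  refine ⟨(factorialFloor N x₁ - factorialFloor N x₂ : ℤ) / (N ! : ℚ), ?_⟩
  rw [← hD]
  push_cast [D]
  rfl

theorem exists_rat_eq_sub_iff_factorialDigit_eventuallyEq (x₁ x₂ : ℝ) :
    (∃ q : ℚ, (q : ℝ) = x₁ - x₂) ↔ (factorialDigit · x₁) =ᶠ[atTop] (factorialDigit · x₂) := by
  refine ⟨?_, exists_rat_eq_sub_of_factorialDigit_eventuallyEq⟩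
  rintro ⟨q, hq⟩
  filter_upwards [eventually_ge_atTop q.den] with n hn
  rw [show x₁ = x₂ + q by linarith, factorialDigit_add_rat hn]

end FactorialDigits

/-- There is a Borel reduction of the Vitali equivalence relation on `ℝ` to the
equivalence relation `E₀` of eventual agreement on `2^ℕ`. -/
theorem vitali_borel_reduces_to_E0 :
    ∃ θ : ℝ → (ℕ → Bool), Measurable θ ∧
      ∀ x₁ x₂ : ℝ, (∃ q : ℚ, (q : ℝ) = x₁ - x₂) ↔ ∃ N : ℕ, ∀ n > N, θ x₁ n = θ x₂ n := by
  have hdigit (x : ℝ) (n : ℕ) : 0 ≤ factorialDigit n x ∧ factorialDigit n x ≤ 2 * n + 1 :=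
    ⟨factorialDigit_nonneg n x, by linarith [factorialDigit_le n x]⟩
  refine ⟨fun x ↦ unaryCode (factorialDigit · x),
    measurable_unaryCode measurable_factorialDigit, fun x₁ x₂ ↦ ?_⟩
  rw [exists_rat_eq_sub_iff_factorialDigit_eventuallyEq,
    ← unaryCode_eventuallyEq_iff (hdigit x₁) (hdigit x₂)]
  simp only [EventuallyEq, atTop_basis_Ioi.eventually_iff, true_and, Set.mem_Ioi]
end

section
/- There is an injective continuous function θ : 2^ℕ → ℝ such that for all x, y ∈ 2^ℕ: x E₀ y if and only if θ(x) − θ(y) ∈ ℚ. -/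
/-!
Send `x ∈ 2^ℕ` to `θ(x) = ∑ xₙ / (n + 2)!`, a continuous map since the weights are summable.
If `x` and `y` agree beyond `N`, then `θ(x) - θ(y)` is a finite sum of rationals.
Conversely, write `θ(x) - θ(y) = ∑ εₙ / (n + 2)!` with `εₙ ∈ {-1, 0, 1}` and, as in the proof
that `e` is irrational, consider the scaled remainders
`Rₘ = (m + 1)! (∑_{n ≥ m} εₙ / (n + 2)!)`. They satisfy `R₀ = θ(x) - θ(y)`,
`Rₘ₊₁ = (m + 2) Rₘ - εₘ` and `|Rₘ| < 1 / (m + 1)`. If `θ(x) - θ(y) = p / d`, the recursion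
makes every `d Rₘ` an integer, of absolute value `< 1` once `d ≤ m + 1`; so `Rₘ = 0` from
there on, and `εₘ = (m + 2) Rₘ - Rₘ₊₁ = 0`. Taking `d = 1` gives injectivity.
-/

open Nat Finset

noncomputable section

theorem summable_inv_factorial_add (n : ℕ) : Summable fun k : ℕ => ((k + n)! : ℝ)⁻¹ := by
  refine (summable_nat_add_iff (f := fun k : ℕ => (k ! : ℝ)⁻¹) n).2 ?_
  simpa using Real.summable_pow_div_factorial 1

theorem tsum_inv_factorial_add_le {n : ℕ} (hn : 0 < n) :
    ∑' k : ℕ, ((k + n)! : ℝ)⁻¹ ≤ (n + 1) / (n ! * n) := by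
  have hratio : (n + 1 : ℝ)⁻¹ < 1 := inv_lt_one_of_one_lt₀ (by norm_cast; omega)
  have hle : ∀ k : ℕ, ((k + n)! : ℝ)⁻¹ ≤ (n ! : ℝ)⁻¹ * (n + 1 : ℝ)⁻¹ ^ k := by
    intro k
    rw [inv_pow, ← mul_inv, add_comm k n]
    gcongr
    exact_mod_cast factorial_mul_pow_le_factorial
  calc ∑' k : ℕ, ((k + n)! : ℝ)⁻¹ ≤ ∑' k : ℕ, (n ! : ℝ)⁻¹ * (n + 1 : ℝ)⁻¹ ^ k :=
        (summable_inv_factorial_add n).tsum_le_tsum hle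
          ((summable_geometric_of_lt_one (by positivity) hratio).mul_left _)
    _ = (n ! : ℝ)⁻¹ * (1 - (n + 1 : ℝ)⁻¹)⁻¹ := by
        rw [tsum_mul_left, tsum_geometric_of_lt_one (by positivity) hratio]
    _ = (n + 1) / (n ! * n) := by
        have : (n : ℝ) ≠ 0 := by positivity
        field_simp
        simp [this]

theorem norm_intCast_div_factorial_le {z : ℤ} (hz : |z| ≤ 1) (k : ℕ) :
    ‖(z : ℝ) / (k ! : ℝ)‖ ≤ (k ! : ℝ)⁻¹ := by
  rw [Real.norm_eq_abs, abs_div, Nat.abs_cast, div_eq_mul_inv]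
  exact mul_le_of_le_one_left (by positivity) (by exact_mod_cast hz)

/- Shifting the factorials by two makes `|factorialSeriesRemainder ε m| < 1 / (m + 1)` hold already
at `m = 0`, so that the value `0` forces every digit to vanish. -/
def factorialSeries (ε : ℕ → ℤ) : ℝ := ∑' n, (ε n : ℝ) / (n + 2)!

def factorialSeriesRemainder (ε : ℕ → ℤ) (m : ℕ) : ℝ :=
  (m + 1)! * (factorialSeries ε - ∑ n ∈ range m, (ε n : ℝ) / (n + 2)!)

theorem factorialSeriesRemainder_zero (ε : ℕ → ℤ) :
    factorialSeriesRemainder ε 0 = factorialSeries ε := by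
  simp [factorialSeriesRemainder]

theorem factorialSeriesRemainder_succ (ε : ℕ → ℤ) (m : ℕ) :
    factorialSeriesRemainder ε (m + 1) = (m + 2) * factorialSeriesRemainder ε m - ε m := by
  simp only [factorialSeriesRemainder, sum_range_succ, factorial_succ (m + 1)]
  push_cast
  field_simp
  ring

section

variable {ε : ℕ → ℤ}

theorem summable_factorialSeries (hε : ∀ n, |ε n| ≤ 1) :
    Summable fun n => (ε n : ℝ) / (n + 2)! :=
  (summable_inv_factorial_add 2).of_norm_bounded fun n =>
    norm_intCast_div_factorial_le (hε n) (n + 2)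

theorem abs_factorialSeriesRemainder_lt (hε : ∀ n, |ε n| ≤ 1) (m : ℕ) :
    |factorialSeriesRemainder ε m| < 1 / (m + 1) := by
  have htail : factorialSeries ε - ∑ n ∈ range m, (ε n : ℝ) / (n + 2)!
      = ∑' k, (ε (k + m) : ℝ) / (k + (m + 2))! := by
    rw [factorialSeries, ← (summable_factorialSeries hε).sum_add_tsum_nat_add m]
    simp only [add_sub_cancel_left, add_assoc]
  have hbound : |∑' k, (ε (k + m) : ℝ) / (k + (m + 2))!| ≤ (m + 3) / ((m + 2)! * (m + 2)) := by
    rw [← Real.norm_eq_abs]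
    refine (tsum_of_norm_bounded (summable_inv_factorial_add (m + 2)).hasSum fun k =>
      norm_intCast_div_factorial_le (hε (k + m)) _).trans ?_
    exact_mod_cast tsum_inv_factorial_add_le (n := m + 2) (by omega)
  rw [factorialSeriesRemainder, htail, abs_mul, Nat.abs_cast]
  calc ((m + 1)! : ℝ) * |∑' k, (ε (k + m) : ℝ) / (k + (m + 2))!|
      ≤ (m + 1)! * ((m + 3) / ((m + 2)! * (m + 2))) := by gcongr
    _ = (m + 3) / ((m + 2) * (m + 2)) := by
      rw [factorial_succ (m + 1)]
      push_cast
      field_simp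
      ring
    _ < 1 / (m + 1) := by
      rw [div_lt_div_iff₀ (by positivity) (by positivity)]
      nlinarith

theorem exists_int_eq_den_mul_factorialSeriesRemainder {q : ℚ} (hq : factorialSeries ε = q)
    (m : ℕ) : ∃ z : ℤ, (q.den : ℝ) * factorialSeriesRemainder ε m = z := by
  induction m with
  | zero =>
    refine ⟨q.num, ?_⟩
    rw [factorialSeriesRemainder_zero, hq, Rat.cast_def]
    field_simp
  | succ m ih =>
    obtain ⟨z, hz⟩ := ih
    refine ⟨(m + 2) * z - q.den * ε m, ?_⟩
    rw [factorialSeriesRemainder_succ]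
    push_cast
    linear_combination (m + 2 : ℝ) * hz

theorem eq_zero_of_factorialSeries_eq_rat (hε : ∀ n, |ε n| ≤ 1) {q : ℚ}
    (hq : factorialSeries ε = q) {m : ℕ} (hm : q.den ≤ m + 1) : ε m = 0 := by
  have hden : (0 : ℝ) < q.den := by exact_mod_cast q.pos
  have hR : ∀ m, q.den ≤ m + 1 → factorialSeriesRemainder ε m = 0 := by
    intro m hm
    obtain ⟨z, hz⟩ := exists_int_eq_den_mul_factorialSeriesRemainder hq m
    have hz_lt : |(z : ℝ)| < 1 :=
      calc |(z : ℝ)| = q.den * |factorialSeriesRemainder ε m| := by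
            rw [← hz, abs_mul, Nat.abs_cast]
        _ < q.den * (1 / (m + 1)) := by gcongr; exact abs_factorialSeriesRemainder_lt hε m
        _ ≤ 1 := by
            rw [mul_one_div, div_le_one (by positivity)]
            exact_mod_cast hm
    have hz0 : z = 0 := Int.abs_lt_one_iff.1 (by exact_mod_cast hz_lt)
    rw [hz0, Int.cast_zero] at hz
    exact (mul_eq_zero.1 hz).resolve_left hden.ne'
  have hsucc := factorialSeriesRemainder_succ ε m
  rw [hR m hm, hR (m + 1) (by omega)] at hsucc
  exact_mod_cast (by linarith : (ε m : ℝ) = 0)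

theorem factorialSeries_eq_ratCast_sum {N : ℕ} (hε : ∀ n ≥ N, ε n = 0) :
    factorialSeries ε = ((∑ n ∈ range N, (ε n : ℚ) / (n + 2)! : ℚ) : ℝ) := by
  rw [factorialSeries, tsum_eq_sum (s := range N) fun n hn => ?_]
  · push_cast
    rfl
  · rw [hε n (by simpa using hn), Int.cast_zero, zero_div]

end

theorem Bool.abs_toInt_le_one (b : Bool) : |b.toInt| ≤ 1 := by
  cases b <;> decide

theorem Bool.abs_toInt_sub_toInt_le_one (a b : Bool) : |a.toInt - b.toInt| ≤ 1 := by
  cases a <;> cases b <;> decide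

theorem Bool.toInt_sub_toInt_eq_zero_iff {a b : Bool} : a.toInt - b.toInt = 0 ↔ a = b := by
  cases a <;> cases b <;> decide

def boolFactorialSeries (x : ℕ → Bool) : ℝ := factorialSeries fun n => (x n).toInt

theorem continuous_boolFactorialSeries : Continuous boolFactorialSeries :=
  continuous_tsum (fun n => (continuous_of_discreteTopology (f := fun b : Bool =>
      (b.toInt : ℝ) / (n + 2)!)).comp (continuous_apply n))
    (summable_inv_factorial_add 2) fun n x =>
      norm_intCast_div_factorial_le (Bool.abs_toInt_le_one (x n)) (n + 2)

theorem boolFactorialSeries_sub (x y : ℕ → Bool) :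
    boolFactorialSeries x - boolFactorialSeries y
      = factorialSeries fun n => (x n).toInt - (y n).toInt := by
  rw [boolFactorialSeries, boolFactorialSeries, factorialSeries, factorialSeries,
    ← (summable_factorialSeries fun n => Bool.abs_toInt_le_one (x n)).tsum_sub
      (summable_factorialSeries fun n => Bool.abs_toInt_le_one (y n))]
  congr 1 with n
  push_cast
  ring

theorem boolFactorialSeries_injective : Function.Injective boolFactorialSeries := by
  intro x y hxy
  have hzero : factorialSeries (fun n => (x n).toInt - (y n).toInt) = ((0 : ℚ) : ℝ) := by
    rw [← boolFactorialSeries_sub, hxy, sub_self, Rat.cast_zero]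
  funext n
  exact Bool.toInt_sub_toInt_eq_zero_iff.1 <| eq_zero_of_factorialSeries_eq_rat
    (fun n => Bool.abs_toInt_sub_toInt_le_one _ _) hzero (by simp)

theorem exists_ratCast_eq_boolFactorialSeries_sub_iff (x y : ℕ → Bool) :
    (∃ q : ℚ, (q : ℝ) = boolFactorialSeries x - boolFactorialSeries y) ↔
      ∃ N : ℕ, ∀ n > N, x n = y n := by
  have hε n : |(x n).toInt - (y n).toInt| ≤ 1 := Bool.abs_toInt_sub_toInt_le_one _ _
  rw [boolFactorialSeries_sub]
  constructor
  · rintro ⟨q, hq⟩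
    exact ⟨q.den, fun n hn => Bool.toInt_sub_toInt_eq_zero_iff.1 <|
      eq_zero_of_factorialSeries_eq_rat hε hq.symm (by omega)⟩
  · rintro ⟨N, hN⟩
    exact ⟨_, (factorialSeries_eq_ratCast_sum (N := N + 1) fun n hn =>
      Bool.toInt_sub_toInt_eq_zero_iff.2 (hN n hn)).symm⟩

/-- There is an injective continuous reduction of the equivalence relation `E₀` of
eventual agreement on `2^ℕ` to the Vitali equivalence relation on `ℝ`. -/
theorem E0_continuously_embeds_in_vitali :
    ∃ θ : (ℕ → Bool) → ℝ, Function.Injective θ ∧ Continuous θ ∧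
      ∀ x y : ℕ → Bool, (∃ N : ℕ, ∀ n > N, x n = y n) ↔ ∃ q : ℚ, (q : ℝ) = θ x - θ y :=
  ⟨boolFactorialSeries, boolFactorialSeries_injective, continuous_boolFactorialSeries,
    fun x y => (exists_ratCast_eq_boolFactorialSeries_sub_iff x y).symm⟩
end
end

section
/- Let G be a topological group and let d₁, d₂ be two compatible left-invariant metrics on G (metrics inducing the topology of G with dᵢ(g·h₁, g·h₂) = dᵢ(h₁, h₂) for all g, h₁, h₂ ∈ G, i = 1, 2). If d₁ is a complete metric, then d₂ is a complete metric. -/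
/-! A left-invariant metric induces the left uniformity of the group (`x ≈ y` iff `x⁻¹ * y ≈ 1`),
which depends only on the topology; completeness depends only on the uniformity. -/

open Filter Topology Uniformity

theorem uniformity_eq_comap_inv_mul_nhds_one_of_dist_mul_left {G : Type*} [Group G]
    [PseudoMetricSpace G] (hinv : ∀ g h₁ h₂ : G, dist (g * h₁) (g * h₂) = dist h₁ h₂) :
    𝓤 G = comap (fun p : G × G => p.1⁻¹ * p.2) (𝓝 1) := by
  have dist_eq (p : G × G) : dist (p.1⁻¹ * p.2) 1 = dist p.1 p.2 := by
    rw [dist_comm, ← hinv p.1, mul_one, mul_inv_cancel_left]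
  refine Metric.uniformity_basis_dist.eq_of_same_basis ?_
  exact (Metric.nhds_basis_ball.comap _).congr (fun _ => Iff.rfl) fun ε _ =>
    Set.ext fun p => by simp only [Set.mem_preimage, Metric.mem_ball, Set.mem_ofPred_eq, dist_eq]

theorem PseudoMetricSpace.toUniformSpace_eq_of_dist_mul_left {G : Type*} [Group G]
    (m₁ m₂ : PseudoMetricSpace G)
    (htop : m₁.toUniformSpace.toTopologicalSpace = m₂.toUniformSpace.toTopologicalSpace)
    (hinv₁ : ∀ g h₁ h₂ : G, m₁.dist (g * h₁) (g * h₂) = m₁.dist h₁ h₂)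
    (hinv₂ : ∀ g h₁ h₂ : G, m₂.dist (g * h₁) (g * h₂) = m₂.dist h₁ h₂) :
    m₁.toUniformSpace = m₂.toUniformSpace := by
  refine UniformSpace.ext ?_
  rw [@uniformity_eq_comap_inv_mul_nhds_one_of_dist_mul_left G _ m₁ hinv₁,
    @uniformity_eq_comap_inv_mul_nhds_one_of_dist_mul_left G _ m₂ hinv₂, htop]

theorem complete_of_complete_left_invariant_general
    (G : Type*) [Group G] [TopologicalSpace G]
    (m₁ m₂ : MetricSpace G)
    (hcompat₁ : m₁.toUniformSpace.toTopologicalSpace = ‹TopologicalSpace G›)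
    (hcompat₂ : m₂.toUniformSpace.toTopologicalSpace = ‹TopologicalSpace G›)
    (hinv₁ : ∀ g h₁ h₂ : G, m₁.dist (g * h₁) (g * h₂) = m₁.dist h₁ h₂)
    (hinv₂ : ∀ g h₁ h₂ : G, m₂.dist (g * h₁) (g * h₂) = m₂.dist h₁ h₂)
    (hc : @CompleteSpace G m₁.toUniformSpace) :
    @CompleteSpace G m₂.toUniformSpace := by
  have huniform : m₁.toUniformSpace = m₂.toUniformSpace :=
    PseudoMetricSpace.toUniformSpace_eq_of_dist_mul_left m₁.toPseudoMetricSpace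
      m₂.toPseudoMetricSpace (hcompat₁.trans hcompat₂.symm) hinv₁ hinv₂
  exact huniform ▸ hc

/-- If a topological group has two compatible left-invariant metrics and one of them is
complete, then so is the other. -/
theorem complete_of_complete_left_invariant
    (G : Type*) [Group G] [TopologicalSpace G] [IsTopologicalGroup G]
    (m₁ m₂ : MetricSpace G)
    (hcompat₁ : m₁.toUniformSpace.toTopologicalSpace = ‹TopologicalSpace G›)
    (hcompat₂ : m₂.toUniformSpace.toTopologicalSpace = ‹TopologicalSpace G›)
    (hinv₁ : ∀ g h₁ h₂ : G, m₁.dist (g * h₁) (g * h₂) = m₁.dist h₁ h₂)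
    (hinv₂ : ∀ g h₁ h₂ : G, m₂.dist (g * h₁) (g * h₂) = m₂.dist h₁ h₂)
    (hc : @CompleteSpace G m₁.toUniformSpace) :
    @CompleteSpace G m₂.toUniformSpace :=
  complete_of_complete_left_invariant_general G m₁ m₂ hcompat₁ hcompat₂ hinv₁ hinv₂ hc
end

section
/- Let G be a subgroup of the group of all permutations of ℕ, where the permutation group carries the topology induced by the embedding g ↦ (g, g⁻¹) into (ℕ → ℕ) × (ℕ → ℕ) with the product topology (ℕ discrete). Then G is closed in this topology if and only if there exist a countable relational first-order language L and an L-structure M with underlying set ℕ such that G = {g : g is an automorphism of M}. -/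
/-- The Polish topology on the group of all permutations of `ℕ`, induced by the embedding
`g ↦ (g, g⁻¹)` into `(ℕ → ℕ) × (ℕ → ℕ)` with the product topology (`ℕ` discrete). -/
def permTopology : TopologicalSpace (Equiv.Perm ℕ) :=
  TopologicalSpace.induced
    (fun g : Equiv.Perm ℕ => ((g : ℕ → ℕ), (g.symm : ℕ → ℕ))) inferInstance

/-!
A relational structure is preserved by `g` as soon as `g` preserves each relation on each
tuple, a condition depending on finitely many values of `g`; so automorphism groups are closed.
Conversely, name every `n`-tuple by an `n`-ary relation symbol interpreted as the `G`-orbit of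
that tuple. A permutation preserving all these relations agrees with some element of `G` on
every finite set, hence lies in the closure of `G`, which is `G` itself.
-/

open FirstOrder Language Structure Topology

namespace FirstOrder.Language

universe u v

theorem setOf_exists_equiv_toEquiv_eq_iInter {L : Language.{u, v}} [L.IsRelational] {M : Type*}
    [L.Structure M] :
    {g : Equiv.Perm M | ∃ e : M ≃[L] M, e.toEquiv = g} =
      ⋂ (n : ℕ) (r : L.Relations n) (x : Fin n → M),
        {g : Equiv.Perm M | RelMap r (g ∘ x) ↔ RelMap r x} := by
  ext g
  simp only [Set.mem_ofPred_eq, Set.mem_iInter]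
  constructor
  · rintro ⟨e, rfl⟩ n r x
    exact e.map_rel r x
  · intro hg
    exact ⟨⟨g, fun f => isEmptyElim f, fun r x => hg _ r x⟩, rfl⟩

abbrev tupleLanguage (α : Type u) : Language.{0, u} := ⟨fun _ => Empty, fun n => Fin n → α⟩

variable {α : Type u}

abbrev orbitStructure (G : Subgroup (Equiv.Perm α)) : (tupleLanguage α).Structure α where
  funMap f := isEmptyElim f
  RelMap x y := ∃ h ∈ G, ⇑h ∘ x = y

theorem exists_equiv_orbitStructure_iff (G : Subgroup (Equiv.Perm α)) (g : Equiv.Perm α) :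
    letI := orbitStructure G
    (∃ e : α ≃[tupleLanguage α] α, e.toEquiv = g) ↔
      ∀ (n : ℕ) (x : Fin n → α), ∃ h ∈ G, ⇑h ∘ x = g ∘ x := by
  let _ := orbitStructure G
  constructor
  · rintro ⟨e, rfl⟩ n x
    exact (e.map_rel x x).mpr ⟨1, one_mem G, rfl⟩
  · intro hg
    refine ⟨⟨g, fun f => isEmptyElim f, fun {n} r y => ?_⟩, rfl⟩
    obtain ⟨k, hk, hky⟩ := hg n y
    show (∃ h ∈ G, ⇑h ∘ r = g ∘ y) ↔ ∃ h ∈ G, ⇑h ∘ r = y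
    constructor
    · rintro ⟨h, hh, hr⟩
      refine ⟨k⁻¹ * h, mul_mem (inv_mem hk) hh, ?_⟩
      rw [Equiv.Perm.coe_mul, Function.comp_assoc, hr, ← hky, ← Function.comp_assoc,
        ← Equiv.Perm.coe_mul, inv_mul_cancel, Equiv.Perm.coe_one, Function.id_comp]
    · rintro ⟨h, hh, rfl⟩
      exact ⟨k * h, mul_mem hk hh, by rw [Equiv.Perm.coe_mul, Function.comp_assoc, hky]⟩

end FirstOrder.Language

theorem exists_finset_setOf_eqOn_subset_of_mem_nhds {ι β : Type*} [TopologicalSpace β]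
    [DiscreteTopology β] {f : ι → β} {u : Set (ι → β)} (hu : u ∈ 𝓝 f) :
    ∃ I : Finset ι, {f' : ι → β | Set.EqOn f' f I} ⊆ u := by
  rw [nhds_pi, Filter.mem_pi'] at hu
  obtain ⟨I, t, ht, hIt⟩ := hu
  refine ⟨I, fun f' hf' => hIt fun i hi => ?_⟩
  rw [hf' hi]
  exact mem_of_mem_nhds (ht i)

section PermTopology

attribute [local instance] permTopology

theorem Equiv.Perm.exists_finset_setOf_eqOn_subset_of_mem_nhds {g : Equiv.Perm ℕ}
    {t : Set (Equiv.Perm ℕ)} (ht : t ∈ 𝓝 g) :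
    ∃ K : Finset ℕ, {h : Equiv.Perm ℕ | Set.EqOn h g K} ⊆ t := by
  classical
  rw [permTopology, nhds_induced, Filter.mem_comap, nhds_prod_eq] at ht
  obtain ⟨s, hs, hst⟩ := ht
  obtain ⟨u, hu, v, hv, huv⟩ := Filter.mem_prod_iff.mp hs
  obtain ⟨I, hI⟩ := _root_.exists_finset_setOf_eqOn_subset_of_mem_nhds hu
  obtain ⟨J, hJ⟩ := _root_.exists_finset_setOf_eqOn_subset_of_mem_nhds hv
  refine ⟨I ∪ J.image g.symm, fun h hh => hst (huv ⟨hI fun a ha => hh (by simp [ha]),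
    hJ fun b hb => ?_⟩)⟩
  -- `h` and `g` agree at `g⁻¹ b`, so `h⁻¹` and `g⁻¹` agree at `b`.
  have hgb : h (g.symm b) = b := by rw [hh (by simp [hb] : g.symm b ∈ _), g.apply_symm_apply]
  exact h.symm_apply_eq.mpr hgb.symm

theorem Equiv.Perm.mem_closure_of_forall_exists_comp_eq {s : Set (Equiv.Perm ℕ)}
    {g : Equiv.Perm ℕ} (H : ∀ (n : ℕ) (x : Fin n → ℕ), ∃ h ∈ s, ⇑h ∘ x = g ∘ x) :
    g ∈ closure s := by
  refine mem_closure_iff_nhds.mpr fun t ht => ?_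
  obtain ⟨K, hK⟩ := exists_finset_setOf_eqOn_subset_of_mem_nhds ht
  obtain ⟨h, hs, hx⟩ := H K.card fun i => K.equivFin.symm i
  refine ⟨h, hK fun a ha => ?_, hs⟩
  simpa using congrFun hx (K.equivFin ⟨a, ha⟩)

theorem Equiv.Perm.isClosed_setOf_comp_mem {n : ℕ} (x : Fin n → ℕ) (s : Set (Fin n → ℕ)) :
    IsClosed {g : Equiv.Perm ℕ | ⇑g ∘ x ∈ s} := by
  have hcont : Continuous fun g : Equiv.Perm ℕ => ((g : ℕ → ℕ), (g.symm : ℕ → ℕ)) :=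
    continuous_induced_dom
  exact (isClosed_discrete s).preimage
    (continuous_pi fun i => (continuous_apply (x i)).comp hcont.fst)

end PermTopology

/-- A subgroup of `S∞` is closed if and only if it is the automorphism group of a
structure on `ℕ` for a countable relational first-order language. -/
theorem closed_subgroup_iff_automorphism_group (G : Subgroup (Equiv.Perm ℕ)) :
    @IsClosed (Equiv.Perm ℕ) permTopology (G : Set (Equiv.Perm ℕ)) ↔
      ∃ L : FirstOrder.Language.{0, 0}, Countable L.Symbols ∧ L.IsRelational ∧
        ∃ S : L.Structure ℕ, (G : Set (Equiv.Perm ℕ)) =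
          {g : Equiv.Perm ℕ | ∃ e : @FirstOrder.Language.Equiv L ℕ ℕ S S, e.toEquiv = g} := by
  let _ := permTopology
  constructor
  · intro hG
    refine ⟨tupleLanguage ℕ, inferInstance, inferInstance, orbitStructure G, ?_⟩
    ext g
    rw [Set.mem_ofPred_eq, exists_equiv_orbitStructure_iff]
    exact ⟨fun hg _ _ => ⟨g, hg, rfl⟩,
      fun H => hG.closure_subset (Equiv.Perm.mem_closure_of_forall_exists_comp_eq H)⟩
  · rintro ⟨L, -, _, S, hS⟩
    rw [hS, setOf_exists_equiv_toEquiv_eq_iInter]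
    exact isClosed_iInter fun n => isClosed_iInter fun r => isClosed_iInter fun x =>
      Equiv.Perm.isClosed_setOf_comp_mem x {y | RelMap r y ↔ RelMap r x}
end

section
/- If A ⊆ ℝ is Lebesgue measurable and invariant under all rational translations (i.e. q + A = A for every q ∈ ℚ), then either A is Lebesgue null or ℝ ∖ A is Lebesgue null. -/
/-!
A measurable ℚ-invariant set is `1`-periodic, hence the preimage of a set `B` on the circle
`ℝ ⧸ ℤ`; `B` is invariant under the dense subgroup of rational rotations, so by ergodicity of
the circle under its rotations it is null or conull, and `(0, 1]` being a fundamental domain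
transfers this back to `ℝ`. A null measurable invariant set is a.e. equal to the measurable
invariant set `⋂ q, (q + ·) ⁻¹' t`, where `t` is a measurable hull.
-/

open MeasureTheory Set Filter

namespace AddCircle

variable {T : ℝ} [hT : Fact (0 < T)]

theorem volume_preimage_coe_eq_zero_iff {B : Set (AddCircle T)} (hB : MeasurableSet B) :
    volume (((↑) : ℝ → AddCircle T) ⁻¹' B) = 0 ↔ volume B = 0 := by
  rw [add_projection_respects_measure T 0 hB]
  refine ⟨measure_mono_null inter_subset_left, fun h ↦ ?_⟩
  exact (isAddFundamentalDomain_Ioc' hT.out 0).measure_zero_of_invariant _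
    (fun g ↦ QuotientAddGroup.sound _ _ g) h

end AddCircle

theorem exists_measurableSet_ae_eq_forall_preimage_ratCast_add_eq {A : Set ℝ}
    (hA : NullMeasurableSet A) (hinv : ∀ q : ℚ, ((q : ℝ) + ·) ⁻¹' A = A) :
    ∃ S, MeasurableSet S ∧ S =ᵐ[volume] A ∧ ∀ q : ℚ, ((q : ℝ) + ·) ⁻¹' S = S := by
  set t := toMeasurable volume A
  refine ⟨⋂ q : ℚ, ((q : ℝ) + ·) ⁻¹' t,
    .iInter fun q ↦ measurable_const_add (q : ℝ) (measurableSet_toMeasurable _ _), ?_, ?_⟩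
  · have : ∀ q : ℚ, ((q : ℝ) + ·) ⁻¹' t =ᵐ[volume] A := fun q ↦ by
      conv_rhs => rw [← hinv q]
      exact (measurePreserving_add_left volume (q : ℝ)).quasiMeasurePreserving.preimage_ae_eq
        hA.toMeasurable_ae_eq
    simpa only [iInter_const] using Filter.EventuallyEq.countable_iInter this
  · intro r
    simp only [preimage_iInter, preimage_preimage, ← add_assoc, ← Rat.cast_add]
    exact (add_right_surjective r).iInter_comp (fun q : ℚ ↦ ((q : ℝ) + ·) ⁻¹' t)

theorem measure_eq_zero_or_measure_compl_eq_zero_of_preimage_ratCast_add_eq {S : Set ℝ}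
    (hS : MeasurableSet S) (hinv : ∀ q : ℚ, ((q : ℝ) + ·) ⁻¹' S = S) :
    volume S = 0 ∨ volume Sᶜ = 0 := by
  let π : ℝ → AddCircle (1 : ℝ) := (↑)
  have hpre : π ⁻¹' (π '' S) = S := by
    have hZ : ∀ x : AddSubgroup.zmultiples (1 : ℝ), (· + (x : ℝ)) ⁻¹' S = S := by
      rintro ⟨_, n, rfl⟩
      simpa [add_comm] using hinv n
    simp only [π, QuotientAddGroup.preimage_image_mk, hZ, iUnion_const]
  have hB : MeasurableSet (π '' S) := by
    change MeasurableSet (π ⁻¹' (π '' S))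
    rwa [hpre]
  have hBinv : ∀ q : ℚ, (π q +ᵥ ·) ⁻¹' (π '' S) = π '' S := fun q ↦
    QuotientAddGroup.mk_surjective.preimage_injective <| by
      change ((q : ℝ) + ·) ⁻¹' (π ⁻¹' (π '' S)) = _
      rw [hpre, hinv]
  have hdense : DenseRange (fun q : ℚ ↦ π q) :=
    QuotientAddGroup.mk_surjective.denseRange.comp Rat.denseRange_cast continuous_quotient_mk'
  have hconst : EventuallyConst (π '' S) (ae volume) :=
    aeconst_of_dense_setOfPred_preimage_vadd_eq hB.nullMeasurableSet <|
      hdense.mono (range_subset_iff.2 hBinv)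
  rcases eventuallyConst_set'.1 hconst with h | h
  · left
    rw [← hpre, AddCircle.volume_preimage_coe_eq_zero_iff hB]
    exact ae_eq_empty.1 h
  · right
    rw [← hpre, ← preimage_compl, AddCircle.volume_preimage_coe_eq_zero_iff hB.compl]
    exact ae_eq_univ.1 h

/-- A Lebesgue measurable subset of `ℝ` invariant under all rational translations is
either null or conull. -/
theorem rational_translation_invariant_null_or_conull
    (A : Set ℝ) (hA : MeasureTheory.NullMeasurableSet A MeasureTheory.volume)
    (hinv : ∀ q : ℚ, (fun x : ℝ => (q : ℝ) + x) '' A = A) :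
    MeasureTheory.volume A = 0 ∨ MeasureTheory.volume Aᶜ = 0 := by
  have hpre : ∀ q : ℚ, ((q : ℝ) + ·) ⁻¹' A = A := fun q ↦ by
    simpa [image_add_left] using hinv (-q)
  obtain ⟨S, hS, hSA, hSinv⟩ := exists_measurableSet_ae_eq_forall_preimage_ratCast_add_eq hA hpre
  rw [← measure_congr hSA, ← measure_congr hSA.compl]
  exact measure_eq_zero_or_measure_compl_eq_zero_of_preimage_ratCast_add_eq hS hSinv
end

section
/- There is no Borel function θ : 2^ℕ → 2^ℕ such that for all x, y ∈ 2^ℕ: x E₀ y if and only if θ(x) = θ(y). -/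
/-!
Equip `2^ℕ` with the fair-coin product measure. A Borel reduction `θ` of `E₀` to equality is
`E₀`-invariant, so each set `{x | θ x n = true}` is a tail event and has measure `0` or `1` by
Kolmogorov's zero-one law; hence `θ` is almost everywhere equal to a constant `z`. The fibre
`θ⁻¹' {z}` is a single `E₀`-class, which is countable and therefore null, contradicting that it
has full measure.
-/

open MeasureTheory Measure ProbabilityTheory Filter Set
open scoped ENNReal

section InfinitePi

variable {X : ℕ → Type*} [∀ n, MeasurableSpace (X n)]

theorem measurableSet_limsup_comap_eval_of_eventually_eq {A : Set (∀ n, X n)}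
    (hA : MeasurableSet A) (hinv : ∀ x y : (∀ n, X n), (∀ᶠ n in atTop, x n = y n) → x ∈ A → y ∈ A) :
    MeasurableSet[limsup (fun n ↦ (inferInstance : MeasurableSpace (X n)).comap (· n)) atTop]
      A := by
  rcases A.eq_empty_or_nonempty with rfl | ⟨a, -⟩
  · exact MeasurableSpace.measurableSet_empty _
  rw [limsup_eq_iInf_iSup_of_nat, MeasurableSpace.measurableSet_iInf]
  intro N
  -- `A` is the preimage of itself under the map overwriting the first `N` coordinates with `a`.
  let g : (∀ n, X n) → ∀ n, X n := fun x n ↦ if n < N then a n else x n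
  have hg : Measurable[⨆ i ≥ N, MeasurableSpace.comap (· i) inferInstance, MeasurableSpace.pi]
      g := by
    refine @measurable_pi_lambda _ _ _ (⨆ i ≥ N, _) _ _ fun n ↦ ?_
    by_cases hn : n < N
    · simp only [g, if_pos hn]
      exact @measurable_const _ _ _ (⨆ i ≥ N, _) _
    · simp only [g, if_neg hn]
      exact (comap_measurable _).mono (le_iSup₂_of_le n (not_lt.1 hn) le_rfl) le_rfl
  have hg_eq (x : ∀ n, X n) : ∀ᶠ n in atTop, g x n = x n :=
    (eventually_ge_atTop N).mono fun n hn ↦ by simp [g, not_lt.2 hn]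
  have hgA : g ⁻¹' A = A := by
    ext x
    exact ⟨hinv _ _ (hg_eq x), hinv _ _ ((hg_eq x).mono fun _ h ↦ h.symm)⟩
  exact hgA ▸ hg hA

variable (μ : ∀ n, Measure (X n)) [∀ n, IsProbabilityMeasure (μ n)]

theorem infinitePi_eq_zero_or_one_of_eventually_eq {A : Set (∀ n, X n)} (hA : MeasurableSet A)
    (hinv : ∀ x y : (∀ n, X n), (∀ᶠ n in atTop, x n = y n) → x ∈ A → y ∈ A) :
    infinitePi μ A = 0 ∨ infinitePi μ A = 1 :=
  measure_zero_or_one_of_measurableSet_limsup_atTop (fun n ↦ (measurable_pi_apply n).comap_le)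
    ((iIndepFun_iff_iIndep _ _ _).1 (iIndepFun_infinitePi (X := fun _ ↦ id) fun _ ↦ measurable_id))
    (measurableSet_limsup_comap_eval_of_eventually_eq hA hinv)

theorem exists_ae_eq_const_of_eventually_eq {ι : Type*} [Countable ι]
    {f : (∀ n, X n) → ι → Bool} (hf : Measurable f)
    (hinv : ∀ x y : (∀ n, X n), (∀ᶠ n in atTop, x n = y n) → f x = f y) :
    ∃ z, ∀ᵐ x ∂infinitePi μ, f x = z := by
  let S (i : ι) : Set (∀ n, X n) := {x | f x i = true}
  have hS (i : ι) : MeasurableSet (S i) :=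
    (measurable_pi_apply i |>.comp hf) (measurableSet_singleton true)
  refine ⟨fun i ↦ decide (infinitePi μ (S i) = 1),
    (ae_all_iff.2 fun i ↦ ?_).mono fun x hx ↦ funext hx⟩
  have h01 := infinitePi_eq_zero_or_one_of_eventually_eq μ (hS i)
    fun x y hxy (hx : f x i = true) ↦ show f y i = true by rwa [← hinv x y hxy]
  rcases h01 with h | h
  · filter_upwards [measure_eq_zero_iff_ae_notMem.1 h] with x hx
    simpa [S, h] using hx
  · filter_upwards [(mem_ae_iff_prob_eq_one (hS i)).2 h] with x hx
    simpa [S, h] using hx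

theorem nullSingletonClass_infinitePi_of_measure_singleton_le
    [∀ n, MeasurableSingletonClass (X n)] {c : ℝ≥0∞} (hc : c < 1) (h : ∀ n a, μ n {a} ≤ c) :
    NullSingletonClass (infinitePi μ) := by
  refine ⟨fun x ↦ le_antisymm (ge_of_tendsto' (ENNReal.tendsto_pow_atTop_nhds_zero_of_lt_one hc)
    fun N ↦ ?_) bot_le⟩
  calc infinitePi μ {x} ≤ infinitePi μ ((Finset.range N : Set ℕ).pi fun n ↦ {x n}) :=
        measure_mono fun y hy ↦ by simp_all
    _ = ∏ n ∈ Finset.range N, μ n {x n} := infinitePi_pi _ fun _ _ ↦ measurableSet_singleton _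
    _ ≤ c ^ N := by simpa using Finset.prod_le_pow_card (Finset.range N) _ _ fun n _ ↦ h n (x n)

end InfinitePi

theorem countable_setOf_eventually_eq {α : Type*} [Countable α] (x : ℕ → α) :
    {y : ℕ → α | ∀ᶠ n in atTop, y n = x n}.Countable := by
  refine (countable_iUnion fun N ↦
    countable_range fun v : Fin N → α ↦ fun n ↦ if h : n < N then v ⟨n, h⟩ else x n).mono ?_
  intro y hy
  obtain ⟨N, hN⟩ := eventually_atTop.1 hy
  refine mem_iUnion.2 ⟨N, fun i ↦ y i, funext fun n ↦ ?_⟩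
  dsimp only
  split_ifs with h
  · rfl
  · exact (hN n (not_lt.1 h)).symm

/-- There is no Borel reduction of the equivalence relation `E₀` of eventual agreement
on `2^ℕ` to equality on `2^ℕ`. -/
theorem no_borel_reduction_E0_to_equality :
    ¬ ∃ θ : (ℕ → Bool) → (ℕ → Bool), Measurable θ ∧
        ∀ x y : ℕ → Bool, (∃ N : ℕ, ∀ n > N, x n = y n) ↔ θ x = θ y := by
  rintro ⟨θ, hθm, hθ⟩
  have hred (x y : ℕ → Bool) : (∀ᶠ n in atTop, x n = y n) ↔ θ x = θ y := by
    simp [← hθ, atTop_basis_Ioi.eventually_iff]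
  let coin : Measure Bool := (PMF.uniformOfFintype Bool).toMeasure
  let μ : Measure (ℕ → Bool) := infinitePi fun _ ↦ coin
  have : NullSingletonClass μ := nullSingletonClass_infinitePi_of_measure_singleton_le _
    (ENNReal.inv_lt_one.2 ENNReal.one_lt_two) fun _ b ↦ by simp [coin]
  obtain ⟨z, hz⟩ := exists_ae_eq_const_of_eventually_eq (fun _ ↦ coin) hθm
    fun x y hxy ↦ (hred x y).1 hxy
  obtain ⟨x₀, hx₀⟩ := hz.exists
  have hclass : ∀ᵐ x ∂μ, x ∈ {y | ∀ᶠ n in atTop, y n = x₀ n} :=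
    hz.mono fun x hx ↦ (hred x x₀).2 (hx.trans hx₀.symm)
  have hnull := (countable_setOf_eventually_eq x₀).measure_zero μ
  obtain ⟨x, hin, hout⟩ := (hclass.and (measure_eq_zero_iff_ae_notMem.1 hnull)).exists
  exact hout hin
end

section
/- Let G be a Polish group, X a Polish G-space, 𝓑₀ a countable basis for the topology of G, and G₀ ⊆ G a countable dense subgroup. Let 𝒞 be a collection of Borel subsets of X closed under finite intersections and under translation by elements of G₀ (g·C ∈ 𝒞 for g ∈ G₀, C ∈ 𝒞). Then for any C₁, …, C_l ∈ 𝒞 and open sets U₁, …, U_l ⊆ G, the set C₁^{ΔU₁} ∩ ⋯ ∩ C_l^{ΔU_l} is a union of sets of the form C^{ΔU} with C ∈ 𝒞 and U ∈ 𝓑₀. -/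
open Pointwise Set TopologicalSpace

section SMul

variable {G X : Type*} [TopologicalSpace G] [SMul G X]

/-- The Vaught transform `B^{*U}`. -/
def vaughtStar (B : Set X) (U : Set G) : Set X :=
  {x : X | IsMeagre {g : G | g ∈ U ∧ g • x ∉ B}}

theorem vaughtDelta_mono {B B' : Set X} {U U' : Set G} (hB : B ⊆ B') (hU : U ⊆ U') :
    vaughtDelta B U ⊆ vaughtDelta B' U' :=
  fun _ hx hme ↦ hx <| hme.mono (by intro g hg; exact ⟨hU hg.1, hB hg.2⟩)

theorem vaughtStar_anti (B : Set X) : Antitone (vaughtStar (G := G) B) :=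
  fun _ _ hU _ hx ↦ hx.mono (by intro g hg; exact ⟨hU hg.1, hg.2⟩)

theorem vaughtStar_iInter {ι : Sort*} [Countable ι] (B : ι → Set X) (U : Set G) :
    vaughtStar (⋂ i, B i) U = ⋂ i, vaughtStar (B i) U := by
  ext x
  have : {g : G | g ∈ U ∧ g • x ∉ ⋂ i, B i} = ⋃ i, {g | g ∈ U ∧ g • x ∉ B i} := by
    ext g; simp
  rw [mem_iInter]
  change IsMeagre (X := G) _ ↔ ∀ i, IsMeagre (X := G) _
  rw [this]
  exact ⟨fun h i ↦ h.mono (subset_iUnion_of_subset i subset_rfl), isMeagre_iUnion⟩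

theorem vaughtStar_subset_vaughtDelta [BaireSpace G] {U : Set G} (hU : IsOpen U)
    (hne : U.Nonempty) (B : Set X) : vaughtStar B U ⊆ vaughtDelta B U := fun x hx hme ↦
  not_isMeagre_of_isOpen hU hne <| (hme.union hx).mono fun g hg ↦
    (em (g • x ∈ B)).imp (⟨hg, ·⟩) (⟨hg, ·⟩)

end SMul

theorem BaireMeasurableSet.exists_mem_basis_isMeagre_diff {α : Type*} [TopologicalSpace α]
    {𝓑 : Set (Set α)} (h𝓑 : IsTopologicalBasis 𝓑) {s U : Set α} (hs : BaireMeasurableSet s)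
    (hU : IsOpen U) (hsU : ¬ IsMeagre (U ∩ s)) :
    ∃ V ∈ 𝓑, V.Nonempty ∧ V ⊆ U ∧ IsMeagre (V \ s) := by
  obtain ⟨W, hW, hsW⟩ := (hU.baireMeasurableSet.inter hs).residualEq_isOpen
  have hsW' : ∀ᶠ g in residual α, g ∈ U ∩ s ↔ g ∈ W := hsW.mem_iff
  obtain ⟨y, hyU, hyW⟩ : (U ∩ W).Nonempty := by
    refine nonempty_of_not_isMeagre fun hUW ↦ hsU ?_
    refine Filter.mem_of_superset (Filter.inter_mem hsW' hUW) fun g hg hgs ↦ hg.2 ⟨hgs.1, ?_⟩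
    exact hg.1.mp hgs
  obtain ⟨V, hV, hyV, hVUW⟩ := h𝓑.exists_subset_of_mem_open (mem_inter hyU hyW) (hU.inter hW)
  refine ⟨V, hV, ⟨y, hyV⟩, fun g hg ↦ (hVUW hg).1, ?_⟩
  filter_upwards [hsW'] with g hg ⟨hgV, hgs⟩
  exact hgs (hg.mpr (hVUW hgV).2).2

theorem exists_mem_basis_mem_vaughtStar_of_mem_vaughtDelta {G X : Type*} [TopologicalSpace G]
    [TopologicalSpace X] [MeasurableSpace X] [BorelSpace X] [SMul G X]
    [ContinuousSMul G X] {𝓑 : Set (Set G)} (h𝓑 : IsTopologicalBasis 𝓑) {B : Set X}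
    (hB : MeasurableSet B) {U : Set G} (hU : IsOpen U) {x : X} (hx : x ∈ vaughtDelta B U) :
    ∃ V ∈ 𝓑, V.Nonempty ∧ V ⊆ U ∧ x ∈ vaughtStar B V := by
  borelize G
  have hBx : MeasurableSet ((· • x) ⁻¹' B : Set G) :=
    (continuous_id.smul continuous_const).measurable hB
  exact hBx.baireMeasurableSet.exists_mem_basis_isMeagre_diff h𝓑 hU hx

theorem exists_mem_basis_one_mem_smul_subset {G ι : Type*} [Monoid G] [TopologicalSpace G]
    [ContinuousConstSMul G G] [Finite ι] {𝓑 : Set (Set G)} (h𝓑 : IsTopologicalBasis 𝓑)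
    {W : ι → Set G} (hW : ∀ i, IsOpen (W i)) {g : ι → G} (hg : ∀ i, g i ∈ W i) :
    ∃ V ∈ 𝓑, (1 : G) ∈ V ∧ ∀ i, g i • V ⊆ W i := by
  have hN : IsOpen (⋂ i, (g i • ·) ⁻¹' W i) :=
    isOpen_iInter_of_finite fun i ↦ (hW i).preimage (continuous_const_smul _)
  have h1N : (1 : G) ∈ ⋂ i, (g i • ·) ⁻¹' W i := mem_iInter.mpr fun i ↦ by simpa using hg i
  obtain ⟨V, hV, h1V, hVN⟩ := h𝓑.exists_subset_of_mem_open h1N hN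
  exact ⟨V, hV, h1V, fun i ↦ smul_set_subset_iff.mpr fun k hk ↦ mem_iInter.mp (hVN hk) i⟩

section Group

variable {G X : Type*} [Group G] [TopologicalSpace G] [ContinuousConstSMul G G] [MulAction G X]

theorem isMeagre_smul_set_iff (h : G) {s : Set G} : IsMeagre (h • s) ↔ IsMeagre s := by
  have key : ∀ (h : G) {s : Set G}, IsMeagre s → IsMeagre (h • s) := fun h s hs ↦ by
    simpa only [image_smul] using (isHomeomorph_smul h).isInducing.isMeagre_image hs
  exact ⟨fun hs ↦ by simpa using key h⁻¹ hs, key h⟩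

theorem vaughtDelta_inv_smul (h : G) (B : Set X) (U : Set G) :
    vaughtDelta (h⁻¹ • B) U = vaughtDelta B (h • U) := by
  ext x
  have : {g : G | g ∈ h • U ∧ g • x ∈ B} = h • {k | k ∈ U ∧ k • x ∈ h⁻¹ • B} := by
    ext g; simp [mem_smul_set_iff_inv_smul_mem, mul_smul]
  simp only [vaughtDelta, mem_ofPred_eq, this, isMeagre_smul_set_iff]

theorem vaughtStar_inv_smul (h : G) (B : Set X) (U : Set G) :
    vaughtStar (h⁻¹ • B) U = vaughtStar B (h • U) := by
  ext x
  have : {g : G | g ∈ h • U ∧ g • x ∉ B} = h • {k | k ∈ U ∧ k • x ∉ h⁻¹ • B} := by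
    ext g; simp [mem_smul_set_iff_inv_smul_mem, mul_smul]
  simp only [vaughtStar, mem_ofPred_eq, this, isMeagre_smul_set_iff]

theorem vaughtDelta_iInter_inv_smul_subset {ι : Type*} {C : ι → Set X} {U : ι → Set G}
    {g : ι → G} {V : Set G} (hgV : ∀ i, g i • V ⊆ U i) :
    vaughtDelta (⋂ i, (g i)⁻¹ • C i) V ⊆ ⋂ i, vaughtDelta (C i) (U i) :=
  subset_iInter fun i ↦ (vaughtDelta_mono (iInter_subset _ i) subset_rfl).trans <|
    (vaughtDelta_inv_smul (g i) (C i) V).trans_subset (vaughtDelta_mono subset_rfl (hgV i))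

end Group

theorem exists_inv_smul_mem_vaughtDelta_of_mem_iInter {G X ι : Type*} [Group G]
    [TopologicalSpace G] [ContinuousConstSMul G G] [BaireSpace G] [TopologicalSpace X]
    [MeasurableSpace X] [BorelSpace X] [MulAction G X] [ContinuousSMul G X] [Finite ι]
    {𝓑 : Set (Set G)} (h𝓑 : IsTopologicalBasis 𝓑) {D : Set G} (hD : Dense D)
    {C : ι → Set X} (hC : ∀ i, MeasurableSet (C i)) {U : ι → Set G} (hU : ∀ i, IsOpen (U i))
    {x : X} (hx : x ∈ ⋂ i, vaughtDelta (C i) (U i)) :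
    ∃ g : ι → G, (∀ i, g i ∈ D) ∧ ∃ V ∈ 𝓑, (∀ i, g i • V ⊆ U i) ∧
      x ∈ vaughtDelta (⋂ i, (g i)⁻¹ • C i) V := by
  choose W hW hWne hWU hxW using fun i ↦
    exists_mem_basis_mem_vaughtStar_of_mem_vaughtDelta h𝓑 (hC i) (hU i) (mem_iInter.mp hx i)
  have hWo i : IsOpen (W i) := h𝓑.isOpen (hW i)
  choose g hgD hgW using fun i ↦ hD.exists_mem_open (hWo i) (hWne i)
  obtain ⟨V, hV, h1V, hgV⟩ := exists_mem_basis_one_mem_smul_subset h𝓑 hWo hgW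
  refine ⟨g, hgD, V, hV, fun i ↦ (hgV i).trans (hWU i),
    vaughtStar_subset_vaughtDelta (h𝓑.isOpen hV) ⟨1, h1V⟩ _ ?_⟩
  rw [vaughtStar_iInter, mem_iInter]
  intro i
  rw [vaughtStar_inv_smul]
  exact vaughtStar_anti _ (hgV i) (hxW i)

theorem inter_vaughtDelta_eq_union_general
    (G : Type*) [Group G] [TopologicalSpace G] [IsTopologicalGroup G] [PolishSpace G]
    (X : Type*) [TopologicalSpace X] [MeasurableSpace X] [BorelSpace X]
    [MulAction G X] [ContinuousSMul G X]
    (𝓑₀ : Set (Set G)) (h𝓑₀ : TopologicalSpace.IsTopologicalBasis 𝓑₀)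
    (G₀ : Subgroup G) (hG₀d : Dense (G₀ : Set G))
    (𝒞 : Set (Set X)) (hBorel : ∀ C ∈ 𝒞, MeasurableSet C)
    (hInter : ∀ C ∈ 𝒞, ∀ D ∈ 𝒞, C ∩ D ∈ 𝒞)
    (hTrans : ∀ g ∈ G₀, ∀ C ∈ 𝒞, (fun x : X => g • x) '' C ∈ 𝒞)
    (l : ℕ) (hl : 0 < l)
    (C : Fin l → Set X) (hC : ∀ i, C i ∈ 𝒞)
    (U : Fin l → Set G) (hU : ∀ i, IsOpen (U i)) :
    ∃ 𝒟 : Set (Set X),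
      (∀ S ∈ 𝒟, ∃ C' ∈ 𝒞, ∃ V ∈ 𝓑₀, S = vaughtDelta C' V) ∧
      (⋂ i, vaughtDelta (C i) (U i)) = ⋃₀ 𝒟 := by
  have : Nonempty (Fin l) := Fin.pos_iff_nonempty.mp hl
  refine ⟨{S | (∃ C' ∈ 𝒞, ∃ V ∈ 𝓑₀, S = vaughtDelta C' V) ∧ S ⊆ ⋂ i, vaughtDelta (C i) (U i)},
    fun S hS ↦ hS.1, Subset.antisymm (fun x hx ↦ ?_) (sUnion_subset fun S hS ↦ hS.2)⟩
  obtain ⟨g, hgG₀, V, hV, hgV, hxV⟩ := exists_inv_smul_mem_vaughtDelta_of_mem_iInter h𝓑₀ hG₀d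
    (fun i ↦ hBorel _ (hC i)) hU hx
  have hmem : ⋂ i, (g i)⁻¹ • C i ∈ 𝒞 := InfClosed.iInf_mem_of_nonempty hInter fun i ↦ by
    rw [← image_smul]
    exact hTrans _ (inv_mem (hgG₀ i)) _ (hC i)
  exact ⟨_, ⟨⟨_, hmem, V, hV, rfl⟩, vaughtDelta_iInter_inv_smul_subset hgV⟩, hxV⟩

/-- If `𝒞` is a family of Borel sets closed under finite intersections and under
translations by a countable dense subgroup `G₀`, then any finite intersection
`C₁^{ΔU₁} ∩ ⋯ ∩ C_l^{ΔU_l}` (with `Cᵢ ∈ 𝒞`, `Uᵢ ⊆ G` open) is a union of sets of the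
form `C^{ΔU}` with `C ∈ 𝒞` and `U` in a countable basis `𝓑₀` of `G`. -/
theorem inter_vaughtDelta_eq_union
    (G : Type*) [Group G] [TopologicalSpace G] [IsTopologicalGroup G] [PolishSpace G]
    (X : Type*) [TopologicalSpace X] [PolishSpace X] [MeasurableSpace X] [BorelSpace X]
    [MulAction G X] [ContinuousSMul G X]
    (𝓑₀ : Set (Set G)) (h𝓑₀ : TopologicalSpace.IsTopologicalBasis 𝓑₀)
    (h𝓑₀c : 𝓑₀.Countable)
    (G₀ : Subgroup G) (hG₀c : (G₀ : Set G).Countable) (hG₀d : Dense (G₀ : Set G))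
    (𝒞 : Set (Set X)) (hBorel : ∀ C ∈ 𝒞, MeasurableSet C)
    (hInter : ∀ C ∈ 𝒞, ∀ D ∈ 𝒞, C ∩ D ∈ 𝒞)
    (hTrans : ∀ g ∈ G₀, ∀ C ∈ 𝒞, (fun x : X => g • x) '' C ∈ 𝒞)
    (l : ℕ) (hl : 0 < l)
    (C : Fin l → Set X) (hC : ∀ i, C i ∈ 𝒞)
    (U : Fin l → Set G) (hU : ∀ i, IsOpen (U i)) :
    ∃ 𝒟 : Set (Set X),
      (∀ S ∈ 𝒟, ∃ C' ∈ 𝒞, ∃ V ∈ 𝓑₀, S = vaughtDelta C' V) ∧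
      (⋂ i, vaughtDelta (C i) (U i)) = ⋃₀ 𝒟 :=
  inter_vaughtDelta_eq_union_general G X 𝓑₀ h𝓑₀ G₀ hG₀d 𝒞 hBorel hInter hTrans l hl C hC U hU
end
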